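/- Every element of K maps each coset of Z to a coset of Z, so K acts on the quotient group G/Z; this action is faithful (only the identity of K induces the identity map on G/Z) and transitive on the set of nonidentity elements of G/Z. -/

import Mathlib

/-- The Heisenberg group `H₃(F)` of upper unitriangular 3×3 matrices over `F`,
recorded by the three free entries: `x` in position (1,2), `y` in position (2,3),
`z` in position (1,3). -/
@[ext]
structure Heis (F : Type*) where
  x : F
  y : F
  z : F
deriving DecidableEq

namespace Heis

variable {F : Type*} [Field F]

/-- Multiplication corresponding to the matrix product. -/
instance : Group (Heis F) where
  mul a b := ⟨a.x + b.x, a.y + b.y, a.z + b.z + a.x * b.y⟩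
  one := ⟨0, 0, 0⟩
  inv a := ⟨-a.x, -a.y, -a.z + a.x * a.y⟩
  mul_assoc a b c := Heis.ext
    (show a.x + b.x + c.x = a.x + (b.x + c.x) by ring)
    (show a.y + b.y + c.y = a.y + (b.y + c.y) by ring)
    (show a.z + b.z + a.x * b.y + c.z + (a.x + b.x) * c.y
        = a.z + (b.z + c.z + b.x * c.y) + a.x * (b.y + c.y) by ring)
  one_mul a := Heis.ext
    (show (0 : F) + a.x = a.x by ring)
    (show (0 : F) + a.y = a.y by ring)
    (show (0 : F) + a.z + 0 * a.y = a.z by ring)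
  mul_one a := Heis.ext
    (show a.x + 0 = a.x by ring)
    (show a.y + 0 = a.y by ring)
    (show a.z + 0 + a.x * 0 = a.z by ring)
  inv_mul_cancel a := Heis.ext
    (show -a.x + a.x = 0 by ring)
    (show -a.y + a.y = 0 by ring)
    (show -a.z + a.x * a.y + a.z + -a.x * a.y = 0 by ring)

instance [Fintype F] : Fintype (Heis F) :=
  Fintype.ofEquiv (F × F × F)
    ⟨fun p => ⟨p.1, p.2.1, p.2.2⟩, fun a => (a.x, a.y, a.z), fun _ => rfl, fun _ => rfl⟩

end Heis

/-- The element `g(x,y,z)` of the Heisenberg group. -/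
def gElt {F : Type*} (x y z : F) : Heis F := ⟨x, y, z⟩

/-- The center `Z = {g(0,0,z) : z ∈ F}` of the Heisenberg group, as a set. -/
def Zset (F : Type*) [Field F] : Set (Heis F) := {g : Heis F | g.x = 0 ∧ g.y = 0}

/-- The center `Z` as a subgroup of the Heisenberg group. -/
def Zsub (F : Type*) [Field F] : Subgroup (Heis F) where
  carrier := Zset F
  mul_mem' := fun {a b} ha hb =>
    ⟨show a.x + b.x = 0 by rw [ha.1, hb.1, add_zero],
     show a.y + b.y = 0 by rw [ha.2, hb.2, add_zero]⟩
  one_mem' := ⟨rfl, rfl⟩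
  inv_mem' := fun {a} ha =>
    ⟨show -a.x = 0 by rw [ha.1, neg_zero],
     show -a.y = 0 by rw [ha.2, neg_zero]⟩

/-- `γ_i(α,β) = αβ/2 + (α² − εβ²)i`. -/
def gam {F : Type*} [Field F] (ε i α β : F) : F := α * β / 2 + (α ^ 2 - ε * β ^ 2) * i

/-- `Y_i = {g(α, β, γ_i(α,β)) : (α,β) ≠ (0,0)}`. -/
def Yset {F : Type*} [Field F] (ε i : F) : Set (Heis F) :=
  {g : Heis F | ∃ α β : F, (α, β) ≠ (0, 0) ∧ g = gElt α β (gam ε i α β)}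

/-- `X_i = Y_i ∪ {e}`. -/
def Xset {F : Type*} [Field F] (ε i : F) : Set (Heis F) := Yset ε i ∪ {1}

/-- The map `ρ(M) : G → G` attached to the matrix `M = [[α,β],[εβ,α]]`. -/
def rho {F : Type*} [Field F] (ε α β : F) : Heis F → Heis F := fun g =>
  gElt (α * g.x + ε * β * g.y) (β * g.x + α * g.y)
    (α * β * (g.x ^ 2 / 2 + ε * g.y ^ 2 / 2) + ε * β ^ 2 * g.x * g.y
      + (α ^ 2 - ε * β ^ 2) * g.z)

/-- `K = {ρ(M) : M = [[α,β],[εβ,α]], (α,β) ≠ (0,0)}`, as a set of maps `G → G`. -/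
def Kset {F : Type*} [Field F] (ε : F) : Set (Heis F → Heis F) :=
  {f | ∃ α β : F, (α, β) ≠ (0, 0) ∧ f = rho ε α β}

/-- The family of sets `{e}`, `Z \ {e}`, `Y_i` for `i ∈ F`. -/
def SFam {F : Type*} [Field F] (ε : F) : Set (Set (Heis F)) :=
  insert {1} (insert (Zset F \ {1}) {S | ∃ i : F, S = Yset ε i})

/-- `f` preserves each of the basic sets `{e}`, `Z \ {e}`, `Y_i`:
`hg⁻¹ ∈ S ↔ f(h)f(g)⁻¹ ∈ S`. -/
def Preserves {F : Type*} [Field F] (ε : F) (f : Heis F → Heis F) : Prop :=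
  ∀ S ∈ SFam ε, ∀ g h : Heis F, h * g⁻¹ ∈ S ↔ f h * (f g)⁻¹ ∈ S

/-- The set of permutations of `G` of the form `x ↦ σ(x)·c` with `σ ∈ K`, `c ∈ G`. -/
def Aset {F : Type*} [Field F] (ε : F) : Set (Equiv.Perm (Heis F)) :=
  {f | ∃ σ ∈ Kset ε, ∃ c : Heis F, ∀ x : Heis F, f x = σ x * c}

/-- The operation `ψ` on `F ∪ {∞}`, with `∞` encoded as `none`. -/
def psi {F : Type*} [Field F] [DecidableEq F] (ε : F) : Option F → Option F → Option F
  | none, j => j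
  | some i, none => some i
  | some i, some j => if i + j = 0 then none else some ((i * j + ε / 16) / (i + j))

/-- `Y_k` for `k ∈ F ∪ {∞}`, where `Y_∞ = Z \ {e}`. -/
def YInf {F : Type*} [Field F] (ε : F) : Option F → Set (Heis F)
  | some i => Yset ε i
  | none => Zset F \ {1}

/-! Identifying `(x, y)` with `x + y√ε ∈ F(√ε)`, the map `ρ(M)` induces on `G/Z ≅ F²`
multiplication by `α + β√ε`, and on `Z` multiplication by the norm `α² − εβ²`, which is nonzero
because `ε` is a nonsquare. Hence `ρ(M)` permutes the cosets of `Z`, it is trivial on `G/Z` only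
for `α + β√ε = 1`, and `F(√ε)ˣ` is transitive on the nonzero vectors of `F(√ε)`. -/

namespace Heis

variable {F : Type*} [Field F]

lemma mul_def (a b : Heis F) : a * b = ⟨a.x + b.x, a.y + b.y, a.z + b.z + a.x * b.y⟩ := rfl

lemma inv_def (a : Heis F) : a⁻¹ = ⟨-a.x, -a.y, -a.z + a.x * a.y⟩ := rfl

end Heis

section

variable {F : Type*} [Field F]

lemma mem_Zsub_iff (g : Heis F) : g ∈ Zsub F ↔ g.x = 0 ∧ g.y = 0 := Iff.rfl

lemma mk_eq_mk_iff_Zsub (a b : Heis F) :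
    (QuotientGroup.mk a : Heis F ⧸ Zsub F) = QuotientGroup.mk b ↔ a.x = b.x ∧ a.y = b.y := by
  rw [QuotientGroup.eq, mem_Zsub_iff]
  simp only [Heis.mul_def, Heis.inv_def, neg_add_eq_zero]

lemma sq_sub_mul_sq_ne_zero {ε : F} (hε : ¬IsSquare ε) {a b : F} (hab : (a, b) ≠ (0, 0)) :
    a ^ 2 - ε * b ^ 2 ≠ 0 := by
  intro h
  rcases eq_or_ne b 0 with rfl | hb
  · exact hab (by simpa using h)
  · exact hε ⟨a / b, by field_simp; linear_combination -h⟩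

variable (ε α β : F)

@[simp] lemma rho_x (g : Heis F) : (rho ε α β g).x = α * g.x + ε * β * g.y := rfl

@[simp] lemma rho_y (g : Heis F) : (rho ε α β g).y = β * g.x + α * g.y := rfl

lemma rho_mul_of_mem_Zsub {c : Heis F} (hc : c ∈ Zsub F) (g : Heis F) :
    rho ε α β (c * g) = gElt 0 0 ((α ^ 2 - ε * β ^ 2) * c.z) * rho ε α β g := by
  obtain ⟨hx, hy⟩ := hc
  simp only [Heis.mul_def, rho, gElt, hx, hy]
  exact Heis.ext (by ring) (by ring) (by ring)

lemma image_rho_image_mul_right {ε α β : F} (hD : α ^ 2 - ε * β ^ 2 ≠ 0) (g : Heis F) :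
    rho ε α β '' ((fun z => z * g) '' (Zsub F : Set (Heis F)))
      = (fun z => z * rho ε α β g) '' (Zsub F : Set (Heis F)) := by
  ext w
  simp only [Set.image_image, Set.mem_image, SetLike.mem_coe]
  constructor
  · rintro ⟨c, hc, rfl⟩
    exact ⟨_, ⟨rfl, rfl⟩, (rho_mul_of_mem_Zsub ε α β hc g).symm⟩
  · rintro ⟨c, ⟨hx, hy⟩, rfl⟩
    refine ⟨gElt 0 0 (c.z / (α ^ 2 - ε * β ^ 2)), ⟨rfl, rfl⟩, ?_⟩
    rw [rho_mul_of_mem_Zsub ε α β ⟨rfl, rfl⟩]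
    change gElt 0 0 ((α ^ 2 - ε * β ^ 2) * (c.z / (α ^ 2 - ε * β ^ 2))) * _ = _
    rw [mul_div_cancel₀ _ hD]
    exact congrArg (· * _) (Heis.ext hx.symm hy.symm rfl)

lemma rho_one_zero : rho ε 1 0 = (id : Heis F → Heis F) := by
  funext g
  exact Heis.ext (by simp) (by simp) (by simp [rho, gElt])

lemma eq_one_and_eq_zero_of_mk_rho_eq
    (h : ∀ g : Heis F, (QuotientGroup.mk (rho ε α β g) : Heis F ⧸ Zsub F) = QuotientGroup.mk g) :
    α = 1 ∧ β = 0 := by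
  simpa [mk_eq_mk_iff_Zsub, gElt] using h (gElt 1 0 0)

lemma exists_mk_rho_eq {ε : F} (hε : ¬IsSquare ε) {g h : Heis F} (hg : g ∉ Zsub F)
    (hh : h ∉ Zsub F) :
    ∃ α β : F, (α, β) ≠ (0, 0) ∧
      (QuotientGroup.mk (rho ε α β g) : Heis F ⧸ Zsub F) = QuotientGroup.mk h := by
  have hd : g.x ^ 2 - ε * g.y ^ 2 ≠ 0 :=
    sq_sub_mul_sq_ne_zero hε fun hc => hg ⟨congrArg Prod.fst hc, congrArg Prod.snd hc⟩
  -- `α + β√ε = (h.x + h.y√ε) / (g.x + g.y√ε)`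
  obtain ⟨α, hα⟩ : ∃ α, α = (g.x * h.x - ε * g.y * h.y) / (g.x ^ 2 - ε * g.y ^ 2) := ⟨_, rfl⟩
  obtain ⟨β, hβ⟩ : ∃ β, β = (g.x * h.y - g.y * h.x) / (g.x ^ 2 - ε * g.y ^ 2) := ⟨_, rfl⟩
  have hx : α * g.x + ε * β * g.y = h.x := by rw [hα, hβ]; field_simp; ring
  have hy : β * g.x + α * g.y = h.y := by
    rw [hα, hβ, div_mul_eq_mul_div, div_mul_eq_mul_div, ← add_div, div_eq_iff hd]
    ring
  refine ⟨α, β, fun hab => hh ?_, (mk_eq_mk_iff_Zsub _ _).2 ⟨hx, hy⟩⟩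
  obtain ⟨rfl, rfl⟩ := Prod.mk.inj hab
  exact ⟨by rw [← hx]; ring, by rw [← hy]; ring⟩

end

theorem statement_14_general {F : Type*} [Field F] (ε : F) (hε : ¬IsSquare ε) :
    (∀ σ ∈ Kset ε, ∀ g : Heis F,
      σ '' ((fun z => z * g) '' (Zsub F : Set (Heis F)))
        = (fun z => z * σ g) '' (Zsub F : Set (Heis F))) ∧
    (∀ σ ∈ Kset ε,
      (∀ g : Heis F, (QuotientGroup.mk (σ g) : Heis F ⧸ Zsub F) = QuotientGroup.mk g) →
      σ = id) ∧
    (∀ g h : Heis F, g ∉ Zsub F → h ∉ Zsub F →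
      ∃ σ ∈ Kset ε, (QuotientGroup.mk (σ g) : Heis F ⧸ Zsub F) = QuotientGroup.mk h) := by
  refine ⟨?_, ?_, ?_⟩
  · rintro σ ⟨α, β, hab, rfl⟩ g
    exact image_rho_image_mul_right (sq_sub_mul_sq_ne_zero hε hab) g
  · rintro σ ⟨α, β, -, rfl⟩ h
    obtain ⟨rfl, rfl⟩ := eq_one_and_eq_zero_of_mk_rho_eq ε α β h
    exact rho_one_zero ε
  · intro g h hg hh
    obtain ⟨α, β, hab, hgh⟩ := exists_mk_rho_eq hε hg hh
    exact ⟨rho ε α β, ⟨α, β, hab, rfl⟩, hgh⟩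

/-- Every element of `K` maps each coset of `Z` to a coset of `Z`, so `K`
acts on `G/Z`; this action is faithful (only the identity of `K` induces the identity on
`G/Z`) and transitive on the set of nonidentity elements of `G/Z`. -/
theorem statement_14 {F : Type*} [Field F] [Fintype F]
    (hodd : Odd (Fintype.card F)) (ε : F) (hε : ¬IsSquare ε) :
    (∀ σ ∈ Kset ε, ∀ g : Heis F,
      σ '' ((fun z => z * g) '' (Zsub F : Set (Heis F)))
        = (fun z => z * σ g) '' (Zsub F : Set (Heis F))) ∧
    (∀ σ ∈ Kset ε,
      (∀ g : Heis F, (QuotientGroup.mk (σ g) : Heis F ⧸ Zsub F) = QuotientGroup.mk g) →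
      σ = id) ∧
    (∀ g h : Heis F, g ∉ Zsub F → h ∉ Zsub F →
      ∃ σ ∈ Kset ε, (QuotientGroup.mk (σ g) : Heis F ⧸ Zsub F) = QuotientGroup.mk h) :=
  statement_14_general ε hε
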